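/- arXiv:1501.07700 — 2 statements merged into one kernel-verified Lean document; each statement's English description precedes it below -/
import Mathlib

section
/- Let (Xₙ) be a Markov chain with countable state space E and transition kernel P that is reversible with respect to a positive measure π (i.e., π(x)P(x,y) = π(y)P(y,x) for all x, y). Then for every x ∈ E, the sequence k ↦ P^{2k}(x, x) is non-increasing in k. -/
open ENNReal NNReal

private lemma amgm_ennreal (a b : ℝ≥0∞) : 2 * (a * b) ≤ a ^ 2 + b ^ 2 := by
  rcases eq_or_ne a ⊤ with ha | ha
  · have : a ^ 2 + b ^ 2 = ⊤ := by simp [ha]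
    exact this ▸ le_top
  rcases eq_or_ne b ⊤ with hb | hb
  · have : a ^ 2 + b ^ 2 = ⊤ := by simp [hb]
    exact this ▸ le_top
  lift a to ℝ≥0 using ha
  lift b to ℝ≥0 using hb
  have h : (2 : ℝ≥0) * (a * b) ≤ a ^ 2 + b ^ 2 := by
    rw [← NNReal.coe_le_coe]
    push_cast
    nlinarith [sq_nonneg ((a : ℝ) - b)]
  exact_mod_cast h

private lemma jensen_ennreal {E : Type*} (p f : E → ℝ≥0∞) (hp : ∑' z, p z = 1) :
    (∑' z, p z * f z) ^ 2 ≤ ∑' z, p z * f z ^ 2 := by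
  rw [← ENNReal.mul_le_mul_iff_right (a := 2) (by norm_num) (by norm_num)]
  have expand : (∑' z, p z * f z) ^ 2 = ∑' z, ∑' w, p z * f z * (p w * f w) := by
    rw [pow_two, ← ENNReal.tsum_mul_right]
    exact tsum_congr fun z => by rw [← ENNReal.tsum_mul_left]
  rw [expand]
  calc 2 * ∑' z, ∑' w, p z * f z * (p w * f w)
      = ∑' z, ∑' w, 2 * (p z * f z * (p w * f w)) := by
        rw [← ENNReal.tsum_mul_left]
        exact tsum_congr fun z => by rw [← ENNReal.tsum_mul_left]
    _ ≤ ∑' z, ∑' w, p z * p w * (f z ^ 2 + f w ^ 2) := by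
        refine ENNReal.tsum_le_tsum fun z => ENNReal.tsum_le_tsum fun w => ?_
        calc 2 * (p z * f z * (p w * f w)) = p z * p w * (2 * (f z * f w)) := by ring
          _ ≤ p z * p w * (f z ^ 2 + f w ^ 2) := mul_le_mul_right (amgm_ennreal _ _) _
    _ = 2 * ∑' z, p z * f z ^ 2 := by
        have h1 : ∀ z, ∑' w, p z * p w * (f z ^ 2 + f w ^ 2)
            = p z * f z ^ 2 + p z * ∑' w, p w * f w ^ 2 := by
          intro z
          have h2 : ∀ w, p z * p w * (f z ^ 2 + f w ^ 2)
              = p z * f z ^ 2 * p w + p z * (p w * f w ^ 2) := fun w => by ring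
          simp_rw [h2]
          rw [ENNReal.tsum_add, ENNReal.tsum_mul_left (a := p z),
            ENNReal.tsum_mul_left (a := p z * f z ^ 2), hp, mul_one]
        simp_rw [h1]
        rw [ENNReal.tsum_add, ENNReal.tsum_mul_right, hp, one_mul, two_mul]

/-- For a reversible Markov chain on a countable state space (transition kernel `P`,
reversible w.r.t. a positive measure `π`), with `Q n` the `n`-step transition
probabilities, the sequence k ↦ Q (2k) x x is non-increasing. -/
theorem reversible_even_return_prob_antitone
    {E : Type*} [Countable E] [DecidableEq E]
    (P : E → E → ℝ) (π : E → ℝ) (Q : ℕ → E → E → ℝ)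
    (hP0 : ∀ x y, 0 ≤ P x y) (hP1 : ∀ x, ∑' y, P x y = 1)
    (hπpos : ∀ x, 0 < π x)
    (hrev : ∀ x y, π x * P x y = π y * P y x)
    (hQ0 : ∀ x y, Q 0 x y = if x = y then 1 else 0)
    (hQsucc : ∀ n x y, Q (n + 1) x y = ∑' z, P x z * Q n z y) :
    ∀ (x : E) (k : ℕ), Q (2 * (k + 1)) x x ≤ Q (2 * k) x x := by
  -- basic real facts
  have hPsum : ∀ x, Summable (P x) := by
    intro x
    by_contra h
    have := hP1 x
    rw [tsum_eq_zero_of_not_summable h] at this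
    norm_num at this
  have hQnn : ∀ n x y, 0 ≤ Q n x y := by
    intro n
    induction n with
    | zero => intro x y; rw [hQ0]; split <;> norm_num
    | succ n ih =>
      intro x y; rw [hQsucc]
      exact tsum_nonneg fun z => mul_nonneg (hP0 x z) (ih z y)
  -- ENNReal versions
  set pe : E → E → ℝ≥0∞ := fun x y => ENNReal.ofReal (P x y) with hpe
  set qe : ℕ → E → E → ℝ≥0∞ := fun n x y => ENNReal.ofReal (Q n x y) with hqe
  set we : E → ℝ≥0∞ := fun x => ENNReal.ofReal (π x) with hwe
  have hpesum : ∀ x, ∑' y, pe x y = 1 := by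
    intro x
    rw [show (1 : ℝ≥0∞) = ENNReal.ofReal (∑' y, P x y) by rw [hP1]; norm_num]
    exact (ENNReal.ofReal_tsum_of_nonneg (hP0 x) (hPsum x)).symm
  have hq0e : ∀ x y, qe 0 x y = if x = y then 1 else 0 := by
    intro x y
    simp only [hqe, hQ0, apply_ite ENNReal.ofReal, ENNReal.ofReal_one, ENNReal.ofReal_zero]
  have hq0sum : ∀ x : E, ∑' y, qe 0 x y = 1 := by
    intro x
    simp_rw [hq0e]
    rw [tsum_eq_single x (fun y hy => if_neg fun h => hy h.symm), if_pos rfl]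
  have herev : ∀ x y, we x * pe x y = we y * pe y x := by
    intro x y
    simp only [hwe, hpe]
    rw [← ENNReal.ofReal_mul (hπpos x).le, ← ENNReal.ofReal_mul (hπpos y).le, hrev]
  -- one induction step: row sums 1 at n give the ENNReal recursion and row sums at n+1
  have hstep : ∀ n, (∀ x, ∑' y, qe n x y = 1) →
      (∀ x y, qe (n + 1) x y = ∑' z, pe x z * qe n z y) ∧
        (∀ x, ∑' y, qe (n + 1) x y = 1) := by
    intro n hrow
    have hle1 : ∀ z y, Q n z y ≤ 1 := by
      intro z y
      have h1 : qe n z y ≤ 1 := (hrow z) ▸ ENNReal.le_tsum y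
      rwa [hqe, ENNReal.ofReal_le_one] at h1
    have hrec : ∀ x y, qe (n + 1) x y = ∑' z, pe x z * qe n z y := by
      intro x y
      have hsumm : Summable (fun z => P x z * Q n z y) := by
        refine Summable.of_nonneg_of_le (fun z => mul_nonneg (hP0 x z) (hQnn n z y))
          (fun z => ?_) (hPsum x)
        calc P x z * Q n z y ≤ P x z * 1 := by
              exact mul_le_mul_of_nonneg_left (hle1 z y) (hP0 x z)
          _ = P x z := mul_one _
      calc qe (n + 1) x y = ENNReal.ofReal (∑' z, P x z * Q n z y) := by
            rw [hqe]; simp only; rw [hQsucc]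
        _ = ∑' z, ENNReal.ofReal (P x z * Q n z y) :=
            ENNReal.ofReal_tsum_of_nonneg
              (fun z => mul_nonneg (hP0 x z) (hQnn n z y)) hsumm
        _ = ∑' z, pe x z * qe n z y :=
            tsum_congr fun z => ENNReal.ofReal_mul (hP0 x z)
    refine ⟨hrec, fun x => ?_⟩
    calc ∑' y, qe (n + 1) x y = ∑' y, ∑' z, pe x z * qe n z y := by simp_rw [hrec]
      _ = ∑' z, ∑' y, pe x z * qe n z y := ENNReal.tsum_comm
      _ = ∑' z, pe x z * ∑' y, qe n z y := tsum_congr fun z => ENNReal.tsum_mul_left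
      _ = ∑' z, pe x z := by simp_rw [hrow, mul_one]
      _ = 1 := hpesum x
  have hrowsum : ∀ n x, ∑' y, qe n x y = 1 := by
    intro n
    induction n with
    | zero => exact hq0sum
    | succ n ih => exact (hstep n ih).2
  have hqrec : ∀ n x y, qe (n + 1) x y = ∑' z, pe x z * qe n z y :=
    fun n => (hstep n (hrowsum n)).1
  have hq1 : ∀ x y, qe 1 x y = pe x y := by
    intro x y
    rw [hqrec 0,
      tsum_eq_single y (fun z hz => by rw [hq0e, if_neg hz, mul_zero]),
      hq0e, if_pos rfl, mul_one]
  -- Chapman-Kolmogorov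
  have hqadd : ∀ m n x y, qe (m + n) x y = ∑' z, qe m x z * qe n z y := by
    intro m
    induction m with
    | zero =>
      intro n x y
      rw [zero_add]
      symm
      rw [tsum_eq_single x
        (fun z hz => by rw [hq0e, if_neg fun h => hz h.symm, zero_mul]),
        hq0e, if_pos rfl, one_mul]
    | succ m ih =>
      intro n x y
      have h : m + 1 + n = (m + n) + 1 := by omega
      rw [h, hqrec]
      calc ∑' z, pe x z * qe (m + n) z y
          = ∑' z, pe x z * ∑' w, qe m z w * qe n w y := by simp_rw [ih]
        _ = ∑' z, ∑' w, pe x z * qe m z w * qe n w y := by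
            refine tsum_congr fun z => ?_
            rw [← ENNReal.tsum_mul_left]
            exact tsum_congr fun w => by ring
        _ = ∑' w, ∑' z, pe x z * qe m z w * qe n w y := ENNReal.tsum_comm
        _ = ∑' w, (∑' z, pe x z * qe m z w) * qe n w y :=
            tsum_congr fun w => ENNReal.tsum_mul_right
        _ = ∑' w, qe (m + 1) x w * qe n w y := by simp_rw [← hqrec]
  -- reversibility of n-step kernel
  have hqrev : ∀ n x y, we x * qe n x y = we y * qe n y x := by
    intro n
    induction n with
    | zero =>
      intro x y
      rw [hq0e, hq0e]
      by_cases h : x = y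
      · subst h; rfl
      · rw [if_neg h, if_neg (Ne.symm h), mul_zero, mul_zero]
    | succ n ih =>
      intro x y
      have rhs : qe (n + 1) y x = ∑' z, qe n y z * pe z x := by
        rw [hqadd n 1]
        exact tsum_congr fun z => by rw [hq1]
      rw [hqrec, rhs]
      calc we x * ∑' z, pe x z * qe n z y
          = ∑' z, we x * pe x z * qe n z y := by
            rw [← ENNReal.tsum_mul_left]
            exact tsum_congr fun z => by ring
        _ = ∑' z, we z * pe z x * qe n z y :=
            tsum_congr fun z => by rw [herev x z]
        _ = ∑' z, pe z x * (we z * qe n z y) := tsum_congr fun z => by ring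
        _ = ∑' z, pe z x * (we y * qe n y z) := tsum_congr fun z => by rw [ih z y]
        _ = we y * ∑' z, qe n y z * pe z x := by
            rw [← ENNReal.tsum_mul_left]
            exact tsum_congr fun z => by ring
  intro x k
  -- the key quantity
  have key : ∀ n, we x * qe (2 * n) x x = ∑' y, we y * (qe n y x) ^ 2 := by
    intro n
    have h2n : 2 * n = n + n := by omega
    rw [h2n, hqadd n n x x, ← ENNReal.tsum_mul_left]
    refine tsum_congr fun y => ?_
    rw [← mul_assoc, hqrev n x y, mul_assoc, ← pow_two]
  have hdec : ∀ n, (∑' y, we y * (qe (n + 1) y x) ^ 2) ≤ ∑' y, we y * (qe n y x) ^ 2 := by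
    intro n
    have hj : ∀ y, (qe (n + 1) y x) ^ 2 ≤ ∑' z, pe y z * (qe n z x) ^ 2 := by
      intro y
      rw [hqrec n y x]
      exact jensen_ennreal (pe y) (fun z => qe n z x) (hpesum y)
    calc ∑' y, we y * (qe (n + 1) y x) ^ 2
        ≤ ∑' y, we y * ∑' z, pe y z * (qe n z x) ^ 2 :=
          ENNReal.tsum_le_tsum fun y => mul_le_mul_right (hj y) _
      _ = ∑' y, ∑' z, we y * pe y z * (qe n z x) ^ 2 := by
          refine tsum_congr fun y => ?_
          rw [← ENNReal.tsum_mul_left]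
          exact tsum_congr fun z => by ring
      _ = ∑' z, ∑' y, we y * pe y z * (qe n z x) ^ 2 := ENNReal.tsum_comm
      _ = ∑' z, (∑' y, we y * pe y z) * (qe n z x) ^ 2 :=
          tsum_congr fun z => ENNReal.tsum_mul_right
      _ = ∑' z, we z * (qe n z x) ^ 2 := by
          refine tsum_congr fun z => ?_
          congr 1
          calc ∑' y, we y * pe y z = ∑' y, we z * pe z y :=
                tsum_congr fun y => herev y z
            _ = we z * ∑' y, pe z y := ENNReal.tsum_mul_left
            _ = we z := by rw [hpesum z, mul_one]
  have h1 : we x * qe (2 * (k + 1)) x x ≤ we x * qe (2 * k) x x := by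
    rw [key (k + 1), key k]
    exact hdec k
  have hw0 : we x ≠ 0 := (ENNReal.ofReal_pos.mpr (hπpos x)).ne'
  have h2 : qe (2 * (k + 1)) x x ≤ qe (2 * k) x x :=
    (ENNReal.mul_le_mul_iff_right hw0 ENNReal.ofReal_ne_top).mp h1
  exact (ENNReal.ofReal_le_ofReal_iff (hQnn (2 * k) x x)).mp h2
end

section
/- Let T_x be the hitting time of vertex x and T⁺_∅ the first return time to ∅ for a Markov chain started at ∅ on a countable state space. Let T^{(k)}_∅ denote the k-th return time to ∅ (T^{(0)}_∅ = 0). Then for every n ≥ 1, P(T_x ≤ n) ≤ P(T_x < T⁺_∅) · (E(Lₙ(∅)) + 1), where Lₙ(∅) := ∑_{i=1}^n 1{Xᵢ = ∅}. -/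
/-!
If the chain visits `x` at a time `i ≤ n`, let `k ≤ i` be its last visit to `root` before `i`.
From time `k` on, the chain reaches `x` before coming back to `root`. A union bound over `k ∈ [0, n]` and the
Markov property at time `k` give
`P(T_x ≤ n) ≤ ∑_{k ≤ n} P(X_k = root) · P(T_x < T⁺_root) = (1 + E Lₙ(root)) · P(T_x < T⁺_root)`.
-/

open MeasureTheory Finset

section PathSpace

variable {ι E : Type*} [MeasurableSpace E] [MeasurableSingletonClass E]

theorem measurableSet_eval_eq (k : ι) (a : E) : MeasurableSet {ω : ι → E | ω k = a} :=
  (measurableSet_singleton a).preimage (measurable_pi_apply k)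

/-- The event `T_x < T⁺_root`: the path visits `x` before it returns to `root`. -/
def hitsBeforeReturn (root x : E) : Set (ℕ → E) :=
  {ω | ∃ i, ω i = x ∧ ∀ j, 1 ≤ j → j ≤ i → ω j ≠ root}

theorem measurableSet_hitsBeforeReturn (root x : E) :
    MeasurableSet (hitsBeforeReturn root x) := by
  have h : hitsBeforeReturn root x =
      ⋃ i, {ω | ω i = x} ∩ ⋂ j, ⋂ (_ : 1 ≤ j ∧ j ≤ i), {ω : ℕ → E | ω j = root}ᶜ := by
    ext ω
    simp [hitsBeforeReturn]
  rw [h]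
  exact .iUnion fun i => (measurableSet_eval_eq i x).inter
    (.iInter fun j => .iInter fun _ => (measurableSet_eval_eq j root).compl)

theorem integral_card_filter_eq_sum_measureReal (μ : Measure (ι → E)) [IsFiniteMeasure μ]
    [DecidableEq E] (s : Finset ι) (a : E) :
    ∫ ω, (#(s.filter fun k => ω k = a) : ℝ) ∂μ = ∑ k ∈ s, μ.real {ω | ω k = a} := by
  have h_indicator (ω : ι → E) : (#(s.filter fun k => ω k = a) : ℝ) =
      ∑ k ∈ s, Set.indicator {ω' : ι → E | ω' k = a} (fun _ => 1) ω := by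
    rw [natCast_card_filter]
    exact sum_congr rfl fun k _ => by simp [Set.indicator_apply]
  simp_rw [h_indicator]
  rw [integral_finsetSum _ fun k _ =>
    (integrable_const (1 : ℝ)).indicator (measurableSet_eval_eq k a)]
  exact sum_congr rfl fun k _ => by simp [integral_indicator_const _ (measurableSet_eval_eq k a)]

end PathSpace

theorem exists_last_visit_shift_mem_hitsBeforeReturn {E : Type*} {root x : E} {ω : ℕ → E}
    (h0 : ω 0 = root) {i : ℕ} (hi : ω i = x) :
    ∃ k ≤ i, ω k = root ∧ (fun j => ω (j + k)) ∈ hitsBeforeReturn root x := by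
  classical
  let P (j : ℕ) : Prop := ω j = root
  have hki : Nat.findGreatest P i ≤ i := Nat.findGreatest_le i
  refine ⟨_, hki, Nat.findGreatest_spec (P := P) (Nat.zero_le i) h0, i - Nat.findGreatest P i,
    by simp [Nat.sub_add_cancel hki, hi], fun j hj hji => ?_⟩
  exact Nat.findGreatest_is_greatest (P := P) (n := i) (by omega) (by omega)

theorem measure_exists_hit_le_sum_mul {E : Type*} [MeasurableSpace E]
    [MeasurableSingletonClass E] (μ : Measure (ℕ → E)) (root x : E)
    (h_start : ∀ᵐ ω ∂μ, ω 0 = root)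
    (h_markov : ∀ k (B : Set (ℕ → E)), MeasurableSet B →
      μ ({ω : ℕ → E | ω k = root} ∩ {ω | (fun i => ω (i + k)) ∈ B}) = μ {ω | ω k = root} * μ B)
    (n : ℕ) :
    μ {ω | ∃ i ≤ n, ω i = x}
      ≤ (∑ k ∈ range (n + 1), μ {ω | ω k = root}) * μ (hitsBeforeReturn root x) := by
  have h_cover : {ω : ℕ → E | ∃ i ≤ n, ω i = x} ∩ {ω | ω 0 = root} ⊆
      ⋃ k ∈ range (n + 1), {ω | ω k = root} ∩
        {ω | (fun i => ω (i + k)) ∈ hitsBeforeReturn root x} := by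
    rintro ω ⟨⟨i, hin, hi⟩, h0⟩
    obtain ⟨k, hki, hk, hshift⟩ := exists_last_visit_shift_mem_hitsBeforeReturn h0 hi
    exact Set.mem_biUnion (mem_range.2 (by omega)) ⟨hk, hshift⟩
  calc μ {ω | ∃ i ≤ n, ω i = x}
      = μ ({ω : ℕ → E | ∃ i ≤ n, ω i = x} ∩ {ω | ω 0 = root}) :=
        (measure_inter_conull (ae_iff.1 h_start)).symm
    _ ≤ ∑ k ∈ range (n + 1),
          μ ({ω | ω k = root} ∩ {ω | (fun i => ω (i + k)) ∈ hitsBeforeReturn root x}) :=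
        (measure_mono h_cover).trans (measure_biUnion_finset_le _ _)
    _ = (∑ k ∈ range (n + 1), μ {ω | ω k = root}) * μ (hitsBeforeReturn root x) := by
        rw [sum_mul]
        exact sum_congr rfl fun k _ => h_markov k _ (measurableSet_hitsBeforeReturn root x)

theorem hitting_prob_le_excursion_prob_mul_local_time_general
    {E : Type*} [DecidableEq E] [MeasurableSpace E]
    [MeasurableSingletonClass E]
    (μ : Measure (ℕ → E)) [IsProbabilityMeasure μ]
    (root x : E)
    (hstart : μ {ω | ω 0 = root} = 1)
    (hMarkov : ∀ (k : ℕ) (D : Set (Fin (k + 1) → E)) (B : Set (ℕ → E)),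
      MeasurableSet B →
      μ ({ω | (fun i : Fin (k + 1) => ω i) ∈ D} ∩ {ω | ω k = root}
          ∩ {ω | (fun i => ω (i + k)) ∈ B})
        = μ ({ω | (fun i : Fin (k + 1) => ω i) ∈ D} ∩ {ω | ω k = root}) * μ B)
    (n : ℕ) :
    (μ {ω | ∃ i ≤ n, ω i = x}).toReal
      ≤ (μ {ω | ∃ i, ω i = x ∧ ∀ j, 1 ≤ j → j ≤ i → ω j ≠ root}).toReal
          * ((∫ ω, ((((Finset.Icc 1 n).filter (fun i => ω i = root)).card : ℝ)) ∂μ)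
              + 1) := by
  have h_start : ∀ᵐ ω ∂μ, ω 0 = root :=
    (ae_iff_measure_eq (measurableSet_eval_eq 0 root).nullMeasurableSet).2 (by simp [hstart])
  have h_markov k (B : Set (ℕ → E)) (hB : MeasurableSet B) :
      μ ({ω | ω k = root} ∩ {ω | (fun i => ω (i + k)) ∈ B}) = μ {ω | ω k = root} * μ B := by
    simpa using hMarkov k Set.univ B hB
  have h_bound := ENNReal.toReal_mono
    (ENNReal.mul_ne_top (ENNReal.sum_ne_top.2 fun _ _ => measure_ne_top _ _) (measure_ne_top _ _))
    (measure_exists_hit_le_sum_mul μ root x h_start h_markov n)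
  rw [ENNReal.toReal_mul, ENNReal.toReal_sum fun _ _ => measure_ne_top _ _,
    sum_range_eq_add_Ico _ (by omega : 0 < n + 1), Ico_add_one_right_eq_Icc] at h_bound
  rw [integral_card_filter_eq_sum_measureReal, mul_comm]
  simpa [measureReal_def, hstart, add_comm, hitsBeforeReturn] using h_bound

/-- For a time-homogeneous Markov chain started at the root (formalized as a
Markov measure on path space, with the Markov property at deterministic times),
P(T_x ≤ n) ≤ P(T_x < T⁺_root) · (E(Lₙ(root)) + 1), where T_x is the hitting
time of x, T⁺_root the first return time to the root, and Lₙ(root) the local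
time at the root in the first n steps. -/
theorem hitting_prob_le_excursion_prob_mul_local_time
    {E : Type*} [Countable E] [DecidableEq E] [MeasurableSpace E]
    [MeasurableSingletonClass E]
    (μ : Measure (ℕ → E)) [IsProbabilityMeasure μ]
    (root x : E) (hx : x ≠ root)
    (hstart : μ {ω | ω 0 = root} = 1)
    (hMarkov : ∀ (k : ℕ) (D : Set (Fin (k + 1) → E)) (B : Set (ℕ → E)),
      MeasurableSet B →
      μ ({ω | (fun i : Fin (k + 1) => ω i) ∈ D} ∩ {ω | ω k = root}
          ∩ {ω | (fun i => ω (i + k)) ∈ B})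
        = μ ({ω | (fun i : Fin (k + 1) => ω i) ∈ D} ∩ {ω | ω k = root}) * μ B)
    (n : ℕ) (hn : 1 ≤ n) :
    (μ {ω | ∃ i ≤ n, ω i = x}).toReal
      ≤ (μ {ω | ∃ i, ω i = x ∧ ∀ j, 1 ≤ j → j ≤ i → ω j ≠ root}).toReal
          * ((∫ ω, ((((Finset.Icc 1 n).filter (fun i => ω i = root)).card : ℝ)) ∂μ)
              + 1) :=
  hitting_prob_le_excursion_prob_mul_local_time_general μ root x hstart hMarkov n
end
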